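/- arXiv:1503.02777 — 3 statements merged into one kernel-verified Lean document; each statement's English description precedes it below -/
import Mathlib

section
/- Let n : ℕ and let ω : Fin n → ℝ be linearly independent over ℚ, and let φ : Fin n → ℝ. Then for every nonempty open set U ⊆ (Fin n → AddCircle (1 : ℝ)) and every t₀ ∈ ℝ there exists t ≥ t₀ with Φ t ∈ U, where Φ t = fun i => ((φ i + ω i * t : ℝ) : AddCircle 1); i.e., the set of hitting times {t : ℝ | Φ t ∈ U} is unbounded above. -/
/-!
For rationally independent frequencies the linear flow on the torus is equidistributed (Weyl):
for every continuous `g`, the time averages of `g` along the flow over `[a, b]` tend to `∫ g`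
as `b → ∞`. For a character `mFourier m` with `m ≠ 0` this holds because `⟨m, ω⟩ ≠ 0`, so the
time integral is a bounded oscillating exponential. The characters span a dense subspace of
`C(𝕋ⁿ, ℂ)` (Stone–Weierstrass) and the averaging maps are uniformly `1`-Lipschitz, so the
convergence extends to every `g`. For a bump function `g` vanishing off `U` with `∫ g ≠ 0`, the
averages over `[t₀, b]` therefore cannot all vanish, so the flow meets `U` after time `t₀`.
-/

open MeasureTheory Filter Topology Complex
open scoped Real

instance : IsProbabilityMeasure (volume : Measure UnitAddCircle) :=
  ⟨by simp [AddCircle.measure_univ]⟩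

section IntervalAverage

variable {E : Type*} [NormedAddCommGroup E] [NormedSpace ℝ E]

lemma norm_intervalAverage_le {f : ℝ → E} {C : ℝ} (hf : ∀ t, ‖f t‖ ≤ C) (a b : ℝ) :
    ‖⨍ t in a..b, f t‖ ≤ C := by
  have hC : 0 ≤ C := (norm_nonneg _).trans (hf 0)
  rw [interval_average_eq, norm_smul, norm_inv, Real.norm_eq_abs]
  calc |b - a|⁻¹ * ‖∫ t in a..b, f t‖ ≤ |b - a|⁻¹ * (C * |b - a|) := by
        gcongr
        exact intervalIntegral.norm_integral_le_of_norm_le_const fun t _ => hf t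
    _ ≤ C := by
        rcases eq_or_ne (b - a) 0 with h | h
        · simpa [h] using hC
        · rw [mul_comm C, inv_mul_cancel_left₀ (abs_ne_zero.2 h)]

lemma tendsto_intervalAverage_zero_of_norm_integral_le {f : ℝ → E} {a C : ℝ}
    (hf : ∀ b, ‖∫ t in a..b, f t‖ ≤ C) :
    Tendsto (fun b => ⨍ t in a..b, f t) atTop (𝓝 0) := by
  have hlim : Tendsto (fun b : ℝ => (b - a)⁻¹ * C) atTop (𝓝 0) := by
    simpa [sub_eq_add_neg] using
      (tendsto_inv_atTop_zero.comp (tendsto_atTop_add_const_right _ (-a) tendsto_id)).mul_const C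
  refine squeeze_zero_norm' ?_ hlim
  filter_upwards [eventually_gt_atTop a] with b hb
  rw [interval_average_eq, norm_smul, norm_inv, Real.norm_eq_abs, abs_of_pos (sub_pos.2 hb)]
  gcongr
  exact hf b

end IntervalAverage

lemma norm_integral_cexp_mul_I_le {r : ℝ} (hr : r ≠ 0) (a b : ℝ) :
    ‖∫ t in a..b, cexp (r * I * t)‖ ≤ 2 / |r| := by
  have hrI : (r : ℂ) * I ≠ 0 := mul_ne_zero (ofReal_ne_zero.2 hr) I_ne_zero
  rw [integral_exp_mul_complex hrI, norm_div, norm_mul, norm_I, mul_one, norm_real,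
    Real.norm_eq_abs]
  gcongr
  calc ‖cexp (r * I * b) - cexp (r * I * a)‖ ≤ ‖cexp (r * I * b)‖ + ‖cexp (r * I * a)‖ :=
        norm_sub_le _ _
    _ = 2 := by
        rw [mul_right_comm, mul_right_comm _ I, ← ofReal_mul, ← ofReal_mul,
          norm_exp_ofReal_mul_I, norm_exp_ofReal_mul_I]
        norm_num

lemma sum_intCast_mul_ne_zero_of_linearIndependent {ι : Type*} [Fintype ι] {ω : ι → ℝ}
    (hω : LinearIndependent ℚ ω) {m : ι → ℤ} (hm : m ≠ 0) : ∑ i, (m i : ℝ) * ω i ≠ 0 := by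
  intro h
  refine hm (funext fun i => ?_)
  refine Fintype.linearIndependent_iff.1 (hω.restrict_scalars' ℤ) m ?_ i
  simpa only [zsmul_eq_mul] using h

namespace ContinuousMap

variable {X E : Type*} [TopologicalSpace X] [CompactSpace X] [NormedAddCommGroup E]
  [NormedSpace ℝ E]

lemma lipschitzWith_one_intervalAverage_comp {γ : ℝ → X} (hγ : Continuous γ) (a b : ℝ) :
    LipschitzWith 1 fun g : C(X, E) => ⨍ t in a..b, g (γ t) := by
  refine LipschitzWith.of_dist_le_mul fun g h => ?_
  have hint (f : C(X, E)) : IntervalIntegrable (fun t => f (γ t)) volume a b :=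
    (f.continuous.comp hγ).intervalIntegrable a b
  rw [NNReal.coe_one, one_mul, dist_eq_norm, dist_eq_norm, interval_average_eq,
    interval_average_eq, ← smul_sub, ← intervalIntegral.integral_sub (hint g) (hint h),
    ← interval_average_eq]
  exact norm_intervalAverage_le (fun t => (g - h).norm_coe_le_norm (γ t)) a b

lemma lipschitzWith_one_integral [MeasurableSpace X] [OpensMeasurableSpace X] (μ : Measure X)
    [IsProbabilityMeasure μ] : LipschitzWith 1 fun g : C(X, E) => ∫ x, g x ∂μ := by
  refine LipschitzWith.of_dist_le_mul fun g h => ?_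
  have hint (f : C(X, E)) : Integrable f μ :=
    f.continuous.integrable_of_hasCompactSupport (HasCompactSupport.of_compactSpace _)
  rw [NNReal.coe_one, one_mul, dist_eq_norm, dist_eq_norm, ← integral_sub (hint g) (hint h)]
  simpa using norm_integral_le_of_norm_le_const (μ := μ)
    (Eventually.of_forall fun x => (g - h).norm_coe_le_norm x)

end ContinuousMap

lemma exists_continuousMap_eq_zero_off_integral_ne_zero {X : Type*} [TopologicalSpace X]
    [T2Space X] [CompactSpace X] [MeasurableSpace X] [OpensMeasurableSpace X] (μ : Measure X)
    [IsFiniteMeasure μ] [μ.IsOpenPosMeasure] {U : Set X} (hU : IsOpen U) (hne : U.Nonempty) :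
    ∃ g : C(X, ℂ), (∀ x ∉ U, g x = 0) ∧ ∫ x, g x ∂μ ≠ 0 := by
  obtain ⟨x₀, hx₀⟩ := hne
  obtain ⟨f, hf_off, hf_x₀, hf_mem⟩ := exists_continuous_zero_one_of_isClosed hU.isClosed_compl
    isClosed_singleton (Set.disjoint_singleton_right.2 (not_not.2 hx₀))
  have hpos : 0 < ∫ x, f x ∂μ :=
    f.continuous.integral_pos_of_hasCompactSupport_nonneg_nonzero
      (HasCompactSupport.of_compactSpace _) (fun x => (hf_mem x).1)
      (x := x₀) (by simp [hf_x₀ rfl])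
  refine ⟨⟨fun x => f x, by fun_prop⟩, fun x hx => by simp [hf_off hx], ?_⟩
  change ∫ x, ((f x : ℝ) : ℂ) ∂μ ≠ 0
  rw [integral_complex_ofReal]
  exact_mod_cast hpos.ne'

namespace UnitAddTorus

variable {ι : Type*} [Fintype ι]

def linearFlow (ω φ : ι → ℝ) (t : ℝ) : UnitAddTorus ι :=
  fun i => ((φ i + ω i * t : ℝ) : UnitAddCircle)

omit [Fintype ι] in
lemma continuous_linearFlow (ω φ : ι → ℝ) : Continuous (linearFlow ω φ) :=
  continuous_pi fun i => (AddCircle.continuous_mk' 1).comp (by fun_prop)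

lemma mFourier_linearFlow (ω φ : ι → ℝ) (m : ι → ℤ) (t : ℝ) :
    mFourier m (linearFlow ω φ t) =
      cexp (↑(2 * π * ∑ i, (m i : ℝ) * φ i) * I) *
        cexp (↑(2 * π * ∑ i, (m i : ℝ) * ω i) * I * t) := by
  simp only [mFourier, linearFlow, ContinuousMap.coe_mk, fourier_coe_apply, ← exp_sum,
    ← exp_add]
  congr 1
  push_cast
  rw [Finset.mul_sum, Finset.mul_sum, Finset.sum_mul, Finset.sum_mul, Finset.sum_mul,
    ← Finset.sum_add_distrib]
  refine Finset.sum_congr rfl fun i _ => ?_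
  ring

lemma integral_mFourier_of_ne_zero {m : ι → ℤ} (hm : m ≠ 0) :
    ∫ x : UnitAddTorus ι, mFourier m x = 0 := by
  obtain ⟨i, hi⟩ := Function.ne_iff.1 hm
  rw [mFourier, ContinuousMap.coe_mk, integral_fintype_prod_volume_eq_prod]
  exact Finset.prod_eq_zero (Finset.mem_univ i)
    (integral_eq_zero_of_add_right_eq_neg (fourier_add_half_inv_index hi one_pos))

lemma tendsto_intervalAverage_mFourier_linearFlow {ω : ι → ℝ} (hω : LinearIndependent ℚ ω)
    (φ : ι → ℝ) (m : ι → ℤ) (a : ℝ) :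
    Tendsto (fun b => ⨍ t in a..b, mFourier m (linearFlow ω φ t)) atTop
      (𝓝 (∫ x, mFourier m x)) := by
  rcases eq_or_ne m 0 with rfl | hm
  · simp only [mFourier_zero, ContinuousMap.one_apply, integral_const, probReal_univ, one_smul]
    refine tendsto_const_nhds.congr' ?_
    filter_upwards [eventually_gt_atTop a] with b hb
    rw [interval_average_eq, intervalIntegral.integral_const, smul_smul,
      inv_mul_cancel₀ (sub_pos.2 hb).ne', one_smul]
  · set r := 2 * π * ∑ i, (m i : ℝ) * ω i
    have hr : r ≠ 0 := mul_ne_zero (by positivity)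
      (sum_intCast_mul_ne_zero_of_linearIndependent hω hm)
    rw [integral_mFourier_of_ne_zero hm]
    refine tendsto_intervalAverage_zero_of_norm_integral_le (C := 1 * (2 / |r|)) fun b => ?_
    simp only [mFourier_linearFlow, intervalIntegral.integral_const_mul, norm_mul]
    gcongr
    · exact (norm_exp_ofReal_mul_I _).le
    · exact norm_integral_cexp_mul_I_le hr a b

theorem tendsto_intervalAverage_linearFlow {ω : ι → ℝ} (hω : LinearIndependent ℚ ω)
    (φ : ι → ℝ) (g : C(UnitAddTorus ι, ℂ)) (a : ℝ) :
    Tendsto (fun b => ⨍ t in a..b, g (linearFlow ω φ t)) atTop (𝓝 (∫ x, g x)) := by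
  let S : Set C(UnitAddTorus ι, ℂ) :=
    {g | Tendsto (fun b => ⨍ t in a..b, g (linearFlow ω φ t)) atTop (𝓝 (∫ x, g x))}
  have hS : IsClosed S :=
    ((LipschitzWith.uniformEquicontinuous _ 1 fun b =>
      ContinuousMap.lipschitzWith_one_intervalAverage_comp (continuous_linearFlow ω φ) a b
      ).equicontinuous).isClosed_setOfPred_tendsto
      (ContinuousMap.lipschitzWith_one_integral volume).continuous
  have hint (f : C(UnitAddTorus ι, ℂ)) : Integrable f :=
    f.continuous.integrable_of_hasCompactSupport (HasCompactSupport.of_compactSpace _)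
  have hint_flow (f : C(UnitAddTorus ι, ℂ)) (b : ℝ) :
      IntervalIntegrable (fun t => f (linearFlow ω φ t)) volume a b :=
    (f.continuous.comp (continuous_linearFlow ω φ)).intervalIntegrable a b
  have hspan : ↑(Submodule.span ℂ (Set.range (mFourier (d := ι)))) ⊆ S := by
    intro g hg
    induction hg using Submodule.span_induction with
    | mem _ hf =>
      obtain ⟨m, rfl⟩ := hf
      exact tendsto_intervalAverage_mFourier_linearFlow hω φ m a
    | zero => simp [S]
    | add f h _ _ hf hh =>
      simp only [S, Set.mem_ofPred_eq, ContinuousMap.add_apply, integral_add (hint f) (hint h)]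
      refine (hf.add hh).congr fun b => ?_
      simp only [interval_average_eq, intervalIntegral.integral_add (hint_flow f b) (hint_flow h b),
        smul_add]
    | smul c f _ hf =>
      simp only [S, Set.mem_ofPred_eq, ContinuousMap.smul_apply, integral_smul]
      refine (hf.const_smul c).congr fun b => ?_
      simp only [interval_average_eq, intervalIntegral.integral_smul, smul_comm c]
  refine hS.closure_subset_iff.2 hspan ?_
  rw [← Submodule.topologicalClosure_coe, span_mFourier_closure_eq_top]
  trivial

end UnitAddTorus

/-- With incommensurable frequencies, every nonempty open set of phase configurations is hit
at arbitrarily late times by the phase flow: the set of hitting times is unbounded above. -/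
theorem phase_flow_hitting_times_unbounded (n : ℕ) (ω : Fin n → ℝ)
    (hω : LinearIndependent ℚ ω) (φ : Fin n → ℝ) :
    ∀ U : Set (Fin n → AddCircle (1 : ℝ)), IsOpen U → U.Nonempty →
      ∀ t₀ : ℝ, ∃ t : ℝ, t₀ ≤ t ∧
        (fun i => ((φ i + ω i * t : ℝ) : AddCircle (1 : ℝ))) ∈ U := by
  intro U hU hne t₀
  obtain ⟨g, hg_off, hg_int⟩ := exists_continuousMap_eq_zero_off_integral_ne_zero volume hU hne
  by_contra! hmiss
  refine hg_int (tendsto_nhds_unique (UnitAddTorus.tendsto_intervalAverage_linearFlow hω φ g t₀)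
    (tendsto_const_nhds.congr' ?_))
  filter_upwards [eventually_ge_atTop t₀] with b hb
  have hzero : Set.EqOn (fun t => g (UnitAddTorus.linearFlow ω φ t)) 0 (Set.uIcc t₀ b) :=
    fun t ht => hg_off _ (hmiss t (Set.uIcc_of_le hb ▸ ht).1)
  rw [interval_average_eq, intervalIntegral.integral_congr hzero]
  simp
end

section
/- Let n : ℕ, and for each i : Fin n let p i = h i + l i with h i > 0 and l i > 0, with offsets φ : Fin n → ℝ, and let H i t ↔ ∃ k : ℤ, 0 ≤ t - φ i - k * p i ∧ t - φ i - k * p i < h i. Assume the frequencies fun i => (p i)⁻¹ are linearly independent over ℚ, and assume h i > l j for all i ≠ j. Then for every r : Fin n and every t₀ : ℝ there exists a ≥ t₀ such that: (i) a is the start of a low phase of oscillator r, i.e., ∃ k : ℤ, a = φ r + h r + k * p r, so that ¬ H r s for all s ∈ Set.Ico a (a + l r); and (ii) for every i ≠ r and every s ∈ Set.Icc a (a + l r), H i s holds. -/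
/-- Oscillatory inhibition waveform: inhibition of oscillator `i` (period `p i`, high-phase
duration `h i`, offset `φ i`) is on at time `t` iff `t` lies in
`[φ i + k * p i, φ i + k * p i + h i)` for some `k : ℤ`. -/
def inhibOn (n : ℕ) (φ p h : Fin n → ℝ) (i : Fin n) (t : ℝ) : Prop :=
  ∃ k : ℤ, 0 ≤ t - φ i - (k : ℝ) * p i ∧ t - φ i - (k : ℝ) * p i < h i

/-!
Sample the phases of the oscillators `i ≠ r` at the starts `φ r + h r + k * p r` of the low
phases of `r`. Measured in units of the periods, they form the forward orbit `x + k • v` of the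
rotation by `v i = p r / p i` on the unit torus indexed by `i ≠ r`, and the ℚ-independence of
the frequencies says exactly that no nontrivial character fixes `v`. Weyl's argument then makes
this orbit dense (Kronecker): Birkhoff averages of a character `χ` tend to `∫ χ`, since
`χ (y + v) = χ v * χ y` with `χ v ≠ 1`; this extends to all continuous functions by density of
trigonometric polynomials, and a bump function vanishing on a non-dense orbit would have zero
integral. So, arbitrarily late, a low phase of `r` starts while every other oscillator `i` is at
a phase in `(0, h i - l r)` of its high phase, an interval that is non-empty because
`h i > l r`; then `i` stays inhibited throughout that low phase.
-/

open Filter Topology MeasureTheory Set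

section BirkhoffAverage

variable {α 𝕜 E : Type*} [RCLike 𝕜] [NormedAddCommGroup E] [NormedSpace 𝕜 E]

theorem birkhoffSum_of_apply_eq_smul {f : α → α} {g : α → E} {c : 𝕜}
    (hg : ∀ y, g (f y) = c • g y) (N : ℕ) (x : α) :
    birkhoffSum f g N x = (∑ k ∈ Finset.range N, c ^ k) • g x := by
  have hiter (k : ℕ) : g (f^[k] x) = c ^ k • g x := by
    induction k with
    | zero => simp
    | succ k ih => rw [Function.iterate_succ_apply', hg, ih, pow_succ', mul_smul]
  simp only [birkhoffSum, Finset.sum_smul, hiter]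

theorem tendsto_birkhoffAverage_of_apply_eq_smul {f : α → α} {g : α → E} {c : 𝕜}
    (hc : ‖c‖ ≤ 1) (hc₁ : c ≠ 1) (hg : ∀ y, g (f y) = c • g y) (x : α) :
    Tendsto (birkhoffAverage 𝕜 f g · x) atTop (𝓝 0) := by
  have hgeom : ∀ N, ‖∑ k ∈ Finset.range N, c ^ k‖ ≤ 2 / ‖c - 1‖ := fun N => by
    rw [geom_sum_eq hc₁, norm_div]
    gcongr
    calc ‖c ^ N - 1‖ ≤ ‖c ^ N‖ + ‖(1 : 𝕜)‖ := norm_sub_le _ _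
      _ ≤ 2 := by rw [norm_pow, norm_one]; linarith [pow_le_one₀ (norm_nonneg c) hc (n := N)]
  refine squeeze_zero_norm (fun N => ?_)
    (tendsto_const_div_atTop_nhds_zero_nat (2 / ‖c - 1‖ * ‖g x‖))
  rw [birkhoffAverage, birkhoffSum_of_apply_eq_smul hg, norm_smul, norm_smul, norm_inv,
    RCLike.norm_natCast, inv_mul_eq_div]
  gcongr
  exact hgeom N

variable {X : Type*} [TopologicalSpace X] [CompactSpace X]

theorem lipschitzWith_birkhoffAverage_apply (f : X → X) (N : ℕ) (x : X) :
    LipschitzWith 1 fun g : C(X, E) => birkhoffAverage 𝕜 f g N x := by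
  refine LipschitzWith.of_dist_le_mul fun g g' => ?_
  have hsub : birkhoffAverage 𝕜 f g N x - birkhoffAverage 𝕜 f g' N x =
      birkhoffAverage 𝕜 f (⇑g - ⇑g') N x := by
    rw [birkhoffAverage_sub]; rfl
  rw [NNReal.coe_one, one_mul, dist_eq_norm, hsub, birkhoffAverage, norm_smul, norm_inv,
    RCLike.norm_natCast, dist_eq_norm]
  have hsum : ‖birkhoffSum f (⇑g - ⇑g') N x‖ ≤ N * ‖g - g'‖ := by
    calc ‖birkhoffSum f (⇑g - ⇑g') N x‖ ≤ ∑ _k ∈ Finset.range N, ‖g - g'‖ :=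
          norm_sum_le_of_le _ fun k _ => (g - g').norm_coe_le_norm _
      _ = N * ‖g - g'‖ := by simp
  rcases N.eq_zero_or_pos with rfl | hN
  · simp
  · rw [inv_mul_le_iff₀ (by positivity)]
    exact hsum

theorem lipschitzWith_integral_continuousMap [NormedSpace ℝ E] [MeasurableSpace X]
    [OpensMeasurableSpace X] (μ : Measure X) [IsProbabilityMeasure μ] :
    LipschitzWith 1 fun g : C(X, E) => ∫ x, g x ∂μ := by
  refine LipschitzWith.of_dist_le_mul fun g g' => ?_
  have hint (g : C(X, E)) : Integrable g μ :=
    g.continuous.integrable_of_hasCompactSupport (.of_compactSpace _)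
  rw [NNReal.coe_one, one_mul, dist_eq_norm, dist_eq_norm, ← integral_sub (hint g) (hint g')]
  simpa using norm_integral_le_of_norm_le_const (μ := μ)
    (Eventually.of_forall fun x => (g - g').norm_coe_le_norm x)

end BirkhoffAverage

theorem LinearIndependent.eq_zero_of_sum_zsmul_eq_zsmul {ι : Type*} [Fintype ι] [DecidableEq ι]
    {x : ι → ℝ} (hx : LinearIndependent ℚ x) {r : ι} {ξ : {i // i ≠ r} → ℤ} {m : ℤ}
    (h : ∑ i, ξ i • x i = m • x r) : ξ = 0 := by
  let c : ι → ℚ := fun j => if hj : j = r then -m else ξ ⟨j, hj⟩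
  have hc : ∑ j, c j • x j = 0 := by
    have hrest : ∑ i : {i // i ≠ r}, c i • x i = ∑ i, ξ i • x i :=
      Finset.sum_congr rfl fun i _ => by simp [c, i.2, Int.cast_smul_eq_zsmul]
    rw [Fintype.sum_eq_add_sum_subtype_ne _ r, hrest, h]
    simp [c, Int.cast_smul_eq_zsmul]
  funext i
  simpa [c, i.2] using Fintype.linearIndependent_iff.mp hx c hc i

namespace UnitAddTorus

variable {d : Type*} [Fintype d]

theorem mFourier_apply_add (ξ : d → ℤ) (x y : UnitAddTorus d) :
    mFourier ξ (x + y) = mFourier ξ x * mFourier ξ y := by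
  simp only [mFourier, ContinuousMap.coe_mk, Pi.add_apply, fourier_apply, smul_add,
    AddCircle.toCircle_add, Circle.coe_mul, Finset.prod_mul_distrib]

theorem mFourier_coe_eq_one_iff (ξ : d → ℤ) (y : d → ℝ) :
    mFourier ξ (fun i => (y i : UnitAddCircle)) = 1 ↔ ∃ m : ℤ, ∑ i, ξ i * y i = m := by
  have h2πI : 2 * Real.pi * Complex.I ≠ 0 := by simp [Real.pi_ne_zero]
  have hexp : mFourier ξ (fun i => (y i : UnitAddCircle)) =
      Complex.exp (↑(∑ i, ξ i * y i) * (2 * Real.pi * Complex.I)) := by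
    simp only [mFourier, ContinuousMap.coe_mk, fourier_coe_apply, ← Complex.exp_sum]
    push_cast
    rw [Finset.sum_mul]
    exact congrArg Complex.exp (Finset.sum_congr rfl fun i _ => by ring)
  rw [hexp, Complex.exp_eq_one_iff]
  simp only [mul_left_inj' h2πI]
  exact exists_congr fun m => by norm_cast

theorem mFourier_div_ne_one {ι : Type*} [Fintype ι] [DecidableEq ι] {p : ι → ℝ}
    (hfreq : LinearIndependent ℚ fun i => (p i)⁻¹) {r : ι} (hr : p r ≠ 0)
    {ξ : {i // i ≠ r} → ℤ} (hξ : ξ ≠ 0) :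
    mFourier ξ (fun i => ((p r / p i : ℝ) : UnitAddCircle)) ≠ 1 := by
  intro h1
  obtain ⟨m, hm⟩ := (mFourier_coe_eq_one_iff ξ _).mp h1
  refine hξ (hfreq.eq_zero_of_sum_zsmul_eq_zsmul (m := m) ?_)
  simp only [zsmul_eq_mul]
  rw [eq_mul_inv_iff_mul_eq₀ hr, Finset.sum_mul, ← hm]
  exact Finset.sum_congr rfl fun i _ => by ring

theorem integral_mFourier_eq_zero {μ : Measure (UnitAddTorus d)} [μ.IsAddRightInvariant]
    {ξ : d → ℤ} {v : UnitAddTorus d} (hv : mFourier ξ v ≠ 1) :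
    ∫ x, mFourier ξ x ∂μ = 0 := by
  have hinv := integral_add_right_eq_self (μ := μ) (fun x => mFourier ξ x) v
  simp only [mFourier_apply_add, integral_mul_const] at hinv
  have : (∫ x, mFourier ξ x ∂μ) * (mFourier ξ v - 1) = 0 := by
    rw [mul_sub, hinv, mul_one, sub_self]
  exact (mul_eq_zero.mp this).resolve_right (sub_ne_zero.mpr hv)

variable {v : UnitAddTorus d}

theorem tendsto_birkhoffAverage_mFourier (hv : ∀ ξ ≠ 0, mFourier ξ v ≠ 1)
    (μ : Measure (UnitAddTorus d)) [IsProbabilityMeasure μ]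
    [μ.IsAddRightInvariant] (ξ : d → ℤ) (x : UnitAddTorus d) :
    Tendsto (birkhoffAverage ℂ (· + v) (mFourier ξ) · x) atTop
      (𝓝 (∫ y, mFourier ξ y ∂μ)) := by
  rcases eq_or_ne ξ 0 with rfl | hξ
  · have hconst : ⇑(mFourier (0 : d → ℤ)) ∘ (· + v) = mFourier 0 := by
      simp only [mFourier_zero, ContinuousMap.coe_one, Pi.one_comp]
    refine tendsto_const_nhds.congr' ((eventually_ne_atTop 0).mono fun N hN => ?_)
    dsimp only
    rw [birkhoffAverage_of_comp_eq ℂ hconst (Nat.cast_ne_zero.mpr hN)]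
    simp [mFourier_zero]
  · rw [integral_mFourier_eq_zero (hv ξ hξ)]
    refine tendsto_birkhoffAverage_of_apply_eq_smul ?_ (hv ξ hξ) (fun y => ?_) x
    · exact ((mFourier ξ).norm_coe_le_norm v).trans_eq mFourier_norm
    · rw [mFourier_apply_add, smul_eq_mul, mul_comm]

theorem tendsto_birkhoffAverage_add_right (hv : ∀ ξ ≠ 0, mFourier ξ v ≠ 1)
    (μ : Measure (UnitAddTorus d)) [IsProbabilityMeasure μ]
    [μ.IsAddRightInvariant] (g : C(UnitAddTorus d, ℂ)) (x : UnitAddTorus d) :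
    Tendsto (birkhoffAverage ℂ (· + v) g · x) atTop (𝓝 (∫ y, g y ∂μ)) := by
  let S : Set C(UnitAddTorus d, ℂ) :=
    {g | Tendsto (birkhoffAverage ℂ (· + v) g · x) atTop (𝓝 (∫ y, g y ∂μ))}
  have hequi : Equicontinuous fun N (g : C(UnitAddTorus d, ℂ)) =>
      birkhoffAverage ℂ (· + v) g N x :=
    (LipschitzWith.uniformEquicontinuous _ 1 fun N =>
      lipschitzWith_birkhoffAverage_apply (𝕜 := ℂ) (· + v) N x).equicontinuous
  have hclosed : IsClosed S :=
    hequi.isClosed_setOfPred_tendsto (lipschitzWith_integral_continuousMap μ).continuous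
  have hspan : (Submodule.span ℂ (range (mFourier (d := d))) : Set C(UnitAddTorus d, ℂ)) ⊆ S := by
    intro g hg
    induction hg using Submodule.span_induction with
    | mem g hg =>
      obtain ⟨ξ, rfl⟩ := hg
      exact tendsto_birkhoffAverage_mFourier hv μ ξ x
    | zero => simp [S, birkhoffAverage, birkhoffSum]
    | add g g' _ _ hg hg' =>
      have hint (g : C(UnitAddTorus d, ℂ)) : Integrable g μ :=
        g.continuous.integrable_of_hasCompactSupport (.of_compactSpace _)
      simp only [S, mem_ofPred_eq, ContinuousMap.coe_add, birkhoffAverage_add, Pi.add_apply,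
        integral_add (hint g) (hint g')]
      exact hg.add hg'
    | smul c g _ hg =>
      simp only [S, mem_ofPred_eq, ContinuousMap.coe_smul, Pi.smul_apply, integral_smul]
      simpa [birkhoffAverage, birkhoffSum, Finset.mul_sum, mul_left_comm c] using hg.const_smul c
  have := closure_minimal hspan hclosed
  rw [← Submodule.topologicalClosure_coe, span_mFourier_closure_eq_top (d := d)] at this
  exact this trivial

theorem dense_range_add_nsmul (hv : ∀ ξ ≠ 0, mFourier ξ v ≠ 1) (x : UnitAddTorus d) :
    Dense (range fun k : ℕ => x + k • v) := by
  let μ : Measure (UnitAddTorus d) := Measure.pi fun _ => AddCircle.haarAddCircle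
  rw [dense_iff_closure_eq]
  by_contra hne
  obtain ⟨y, hy⟩ := (ne_univ_iff_exists_notMem _).mp hne
  obtain ⟨f, hf0, hf1, hf01⟩ := exists_continuous_zero_one_of_isClosed isClosed_closure
    isClosed_singleton (disjoint_singleton_right.mpr hy)
  have hpos : 0 < ∫ z, f z ∂μ :=
    f.continuous.integral_pos_of_hasCompactSupport_nonneg_nonzero (.of_compactSpace _)
      (fun z => (hf01 z).1) (x := y) (by simp [hf1 (mem_singleton y)])
  let g : C(UnitAddTorus d, ℂ) := ⟨fun z => f z, by fun_prop⟩
  have horbit (N : ℕ) : birkhoffAverage ℂ (· + v) g N x = 0 := by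
    simp [g, birkhoffAverage, birkhoffSum, add_right_iterate_apply,
      hf0 (subset_closure (mem_range_self _))]
  have hzero : ∫ z, (f z : ℂ) ∂μ = 0 :=
    tendsto_nhds_unique (tendsto_birkhoffAverage_add_right hv μ g x)
      (tendsto_const_nhds.congr fun N => (horbit N).symm)
  rw [integral_complex_ofReal] at hzero
  exact hpos.ne' (by exact_mod_cast hzero)

theorem exists_ge_add_nsmul_mem (hv : ∀ ξ ≠ 0, mFourier ξ v ≠ 1) (x : UnitAddTorus d)
    {U : Set (UnitAddTorus d)} (hU : IsOpen U) (hne : U.Nonempty) (K : ℕ) :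
    ∃ k ≥ K, x + k • v ∈ U := by
  obtain ⟨_, ⟨k, rfl⟩, hk⟩ :=
    (dense_range_add_nsmul hv (x + K • v)).exists_mem_open hU hne
  exact ⟨K + k, K.le_add_right k, by rwa [add_nsmul, ← add_assoc]⟩

end UnitAddTorus

section Oscillators

variable {n : ℕ} {φ p h : Fin n → ℝ} {i : Fin n}

theorem not_inhibOn_of_mem_Ico {l : ℝ} (hp : p i = h i + l) (hp₀ : 0 ≤ p i) (k : ℤ) {s : ℝ}
    (hs : s ∈ Ico (φ i + h i + k * p i) (φ i + h i + k * p i + l)) :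
    ¬ inhibOn n φ p h i s := by
  rintro ⟨m, hm₀, hm₁⟩
  have hneg : (k - m : ℝ) * p i < 0 := by linarith [hs.1]
  have hlt : k - m < 0 := by exact_mod_cast neg_of_mul_neg_left hneg hp₀
  have hkm : (k - m : ℝ) ≤ -1 := by exact_mod_cast Int.le_sub_one_of_lt hlt
  have : (k - m : ℝ) * p i ≤ -p i := by nlinarith
  linarith [hs.2]

theorem inhibOn_of_phase_mem (hpi : 0 < p i) {t c : ℝ}
    (hphase : (((t - φ i) / p i : ℝ) : UnitAddCircle) ∈ (↑) '' Ioo 0 ((h i - c) / p i))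
    {s : ℝ} (hs : s ∈ Icc t (t + c)) : inhibOn n φ p h i s := by
  obtain ⟨y, ⟨hy₀, hy₁⟩, hyt⟩ := hphase
  have hzero : (((t - φ i) / p i - y : ℝ) : UnitAddCircle) = 0 := by
    rw [AddCircle.coe_sub, hyt, sub_self]
  obtain ⟨m, hm⟩ := (AddCircle.coe_eq_zero_iff (1 : ℝ)).mp hzero
  rw [zsmul_one] at hm
  have hphase : t - φ i - m * p i = y * p i := by
    rw [hm]
    field_simp
    ring
  rw [lt_div_iff₀ hpi] at hy₁
  have := mul_pos hy₀ hpi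
  exact ⟨m, by linarith [hs.1], by linarith [hs.2]⟩

end Oscillators

/-- Timing lemma for the proofs of Propositions 1 and 2: with incommensurable frequencies
`(p i)⁻¹` and `h i > l j` for all `i ≠ j`, for every oscillator `r` and every time `t₀` there
is a later start `a` of a complete low (inhibition-off) cycle of `r` during which inhibition
is on in all other oscillators. -/
theorem exists_unopposed_low_cycle (n : ℕ) (h l φ p : Fin n → ℝ)
    (hp : ∀ i, p i = h i + l i) (hh : ∀ i, 0 < h i) (hl : ∀ i, 0 < l i)
    (hfreq : LinearIndependent ℚ (fun i => (p i)⁻¹))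
    (hdom : ∀ i j, i ≠ j → h i > l j)
    (r : Fin n) (t₀ : ℝ) :
    ∃ a : ℝ, t₀ ≤ a ∧ (∃ k : ℤ, a = φ r + h r + (k : ℝ) * p r) ∧
      (∀ s ∈ Set.Ico a (a + l r), ¬ inhibOn n φ p h r s) ∧
      (∀ i, i ≠ r → ∀ s ∈ Set.Icc a (a + l r), inhibOn n φ p h i s) := by
  have hpos (i : Fin n) : 0 < p i := hp i ▸ add_pos (hh i) (hl i)
  let x : UnitAddTorus {i // i ≠ r} := fun i =>
    (((φ r + h r - φ i) / p i : ℝ) : UnitAddCircle)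
  let v : UnitAddTorus {i // i ≠ r} := fun i => ((p r / p i : ℝ) : UnitAddCircle)
  let U : Set (UnitAddTorus {i // i ≠ r}) := univ.pi fun i => (↑) '' Ioo 0 ((h i - l r) / p i)
  have hU : IsOpen U :=
    isOpen_set_pi finite_univ fun i _ => QuotientAddGroup.isOpenMap_coe _ isOpen_Ioo
  have hUne : U.Nonempty := univ_pi_nonempty_iff.mpr fun i =>
    (nonempty_Ioo.mpr (div_pos (sub_pos.mpr (hdom i r i.2)) (hpos i))).image _
  obtain ⟨K, hK⟩ := exists_nat_ge ((t₀ - φ r - h r) / p r)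
  obtain ⟨k, hKk, hk⟩ := UnitAddTorus.exists_ge_add_nsmul_mem
    (fun ξ hξ => UnitAddTorus.mFourier_div_ne_one hfreq (hpos r).ne' hξ) x hU hUne K
  refine ⟨φ r + h r + k * p r, ?_, ⟨k, by push_cast; rfl⟩,
    fun s hs => not_inhibOn_of_mem_Ico (hp r) (hpos r).le k (by exact_mod_cast hs),
    fun i hi s hs => inhibOn_of_phase_mem (hpos i) ?_ hs⟩
  · rw [div_le_iff₀ (hpos r)] at hK
    have : (K : ℝ) * p r ≤ k * p r :=
      mul_le_mul_of_nonneg_right (by exact_mod_cast hKk) (hpos r).le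
    linarith
  · convert hk ⟨i, hi⟩ (mem_univ _) using 1
    simp only [x, Pi.add_apply, Pi.smul_apply, ← AddCircle.coe_nsmul, ← AddCircle.coe_add]
    congr 1
    rw [nsmul_eq_mul]
    ring
end

section
/- Let m : ℕ with 1 ≤ m, let S : Fin (m + 1) → Type with each S i finite and nonempty, and let C ⊆ ((i : Fin (m + 1)) → S i) be a nonempty set of allowed configurations. Define the hub domain Hd = {σ : (i : Fin m) → S i.castSucc | ∃ a : S (Fin.last m), Fin.snoc σ a ∈ C}. Then for every full assignment v : (i : Fin (m + 1)) → S i and every η ∈ Hd, the pair (v, η) satisfies all the pairwise hub constraints — namely η i = v i.castSucc for every i : Fin m, and Fin.snoc η (v (Fin.last m)) ∈ C — if and only if η = fun i => v i.castSucc and v ∈ C. Consequently, the map sending v ∈ C to (v, fun i => v i.castSucc) is a bijection from C onto the set of pairs (v, η) with η ∈ Hd satisfying all the pairwise hub constraints. -/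
/-!
Agreement of the hub state `η` with `v` on the first `m` coordinates forces `η = Fin.init v`,
and `Fin.snoc (Fin.init v) (v (Fin.last m)) = v`, so the remaining pairwise constraint says
exactly `v ∈ C`; conversely each `v ∈ C` witnesses that `Fin.init v` lies in the hub domain.
-/

section HubConstruction

variable {m : ℕ} {S : Fin (m + 1) → Type*} (C : Set ((i : Fin (m + 1)) → S i))

def hubDomain : Set ((i : Fin m) → S i.castSucc) :=
  {σ | ∃ a : S (Fin.last m), Fin.snoc σ a ∈ C}

def HubConsistent (v : (i : Fin (m + 1)) → S i) (η : (i : Fin m) → S i.castSucc) : Prop :=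
  (∀ i : Fin m, η i = v i.castSucc) ∧ Fin.snoc η (v (Fin.last m)) ∈ C

variable {C}

theorem init_mem_hubDomain {v : (i : Fin (m + 1)) → S i} (hv : v ∈ C) :
    Fin.init v ∈ hubDomain C :=
  ⟨v (Fin.last m), by rwa [Fin.snoc_init_self]⟩

theorem hubConsistent_iff {v : (i : Fin (m + 1)) → S i} {η : (i : Fin m) → S i.castSucc} :
    HubConsistent C v η ↔ η = Fin.init v ∧ v ∈ C := by
  change (∀ i, η i = Fin.init v i) ∧ _ ↔ _
  rw [← funext_iff]
  constructor
  · rintro ⟨rfl, hv⟩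
    exact ⟨rfl, by rwa [Fin.snoc_init_self] at hv⟩
  · rintro ⟨rfl, hv⟩
    exact ⟨rfl, by rwa [Fin.snoc_init_self]⟩

theorem bijOn_hubConsistent :
    Set.BijOn (fun v => (v, Fin.init v)) C
      {p : ((i : Fin (m + 1)) → S i) × ((i : Fin m) → S i.castSucc) |
        p.2 ∈ hubDomain C ∧ HubConsistent C p.1 p.2} := by
  refine ⟨fun v hv => ⟨init_mem_hubDomain hv, hubConsistent_iff.2 ⟨rfl, hv⟩⟩,
    fun v _ w _ h => congrArg Prod.fst h, ?_⟩
  rintro ⟨v, η⟩ ⟨-, hvη : HubConsistent C v η⟩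
  obtain ⟨rfl, hv⟩ := hubConsistent_iff.1 hvη
  exact ⟨v, hv, rfl⟩

end HubConstruction

theorem hub_construction_correct_general (m : ℕ) (S : Fin (m + 1) → Type*)
    (C : Set ((i : Fin (m + 1)) → S i)) :
    (∀ (v : (i : Fin (m + 1)) → S i) (η : (i : Fin m) → S i.castSucc),
      η ∈ {σ : (i : Fin m) → S i.castSucc | ∃ a : S (Fin.last m), Fin.snoc σ a ∈ C} →
      (((∀ i : Fin m, η i = v i.castSucc) ∧ Fin.snoc η (v (Fin.last m)) ∈ C) ↔
        ((η = fun i : Fin m => v i.castSucc) ∧ v ∈ C))) ∧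
    Set.BijOn
      (fun v : (i : Fin (m + 1)) → S i => (v, fun i : Fin m => v i.castSucc))
      C
      {p : ((i : Fin (m + 1)) → S i) × ((i : Fin m) → S i.castSucc) |
        p.2 ∈ {σ : (i : Fin m) → S i.castSucc | ∃ a : S (Fin.last m), Fin.snoc σ a ∈ C} ∧
        (∀ i : Fin m, p.2 i = p.1 i.castSucc) ∧
        Fin.snoc p.2 (p.1 (Fin.last m)) ∈ C} :=
  ⟨fun _ _ _ => hubConsistent_iff, bijOn_hubConsistent⟩

/-- Correctness of the hub construction for high-order consistency conditions: with hub
domain `Hd` consisting of the tuples over the first `m` variables extendable to an allowed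
configuration in `C`, a pair `(v, η)` with `η ∈ Hd` satisfies all the pairwise hub
constraints iff `η` is the restriction of `v` and `v ∈ C`; consequently
`v ↦ (v, fun i => v i.castSucc)` is a bijection from `C` onto the pairwise-consistent
pairs. -/
theorem hub_construction_correct (m : ℕ) (hm : 1 ≤ m) (S : Fin (m + 1) → Type*)
    [∀ i, Fintype (S i)] [∀ i, Nonempty (S i)]
    (C : Set ((i : Fin (m + 1)) → S i)) (hC : C.Nonempty) :
    (∀ (v : (i : Fin (m + 1)) → S i) (η : (i : Fin m) → S i.castSucc),
      η ∈ {σ : (i : Fin m) → S i.castSucc | ∃ a : S (Fin.last m), Fin.snoc σ a ∈ C} →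
      (((∀ i : Fin m, η i = v i.castSucc) ∧ Fin.snoc η (v (Fin.last m)) ∈ C) ↔
        ((η = fun i : Fin m => v i.castSucc) ∧ v ∈ C))) ∧
    Set.BijOn
      (fun v : (i : Fin (m + 1)) → S i => (v, fun i : Fin m => v i.castSucc))
      C
      {p : ((i : Fin (m + 1)) → S i) × ((i : Fin m) → S i.castSucc) |
        p.2 ∈ {σ : (i : Fin m) → S i.castSucc | ∃ a : S (Fin.last m), Fin.snoc σ a ∈ C} ∧
        (∀ i : Fin m, p.2 i = p.1 i.castSucc) ∧
        Fin.snoc p.2 (p.1 (Fin.last m)) ∈ C} :=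
  hub_construction_correct_general m S C
end
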